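/- arXiv:1312.5241 — 6 statements merged into one kernel-verified Lean document; each statement's English description precedes it below -/
import Mathlib

section
/- For every integer k ≥ 0, d_k + 1 = -2s_k^2 where s_k = ((2+√3)^k - (2-√3)^k)/(2√3); that is, there exists a nonnegative integer s with d_k + 1 = -2s^2. -/
def d : ℕ → ℤ
  | 0 => -1
  | 1 => -3
  | (l+2) => 14 * d (l+1) - d l + 8

def S : ℕ → ℕ
  | 0 => 0
  | 1 => 1
  | (l+2) => 4 * S (l+1) - S l

lemma S_mono : ∀ k, S k ≤ S (k+1) := by
  intro k
  induction k using Nat.twoStepInduction with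
  | zero => simp [S]
  | one => simp [S]
  | more n ih1 ih2 =>
    show S (n+2) ≤ 4 * S (n+2) - S (n+1)
    have h1 : S (n+1) ≤ S (n+2) := ih2
    omega

lemma S_rec (l : ℕ) : (S (l+2) : ℤ) = 4 * S (l+1) - S l := by
  have h := S_mono l
  show ((4 * S (l+1) - S l : ℕ) : ℤ) = _
  have : S l ≤ 4 * S (l+1) := by omega
  push_cast [Nat.cast_sub this]
  ring

lemma S_inv : ∀ k, (S (k+1) : ℤ)^2 + (S k : ℤ)^2 - 4 * S (k+1) * S k = 1 := by
  intro k
  induction k with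
  | zero => simp [S]
  | succ n ih =>
    have h := S_rec n
    nlinarith [h, ih]

lemma d_eq : ∀ k, d k = -2 * (S k : ℤ)^2 - 1 := by
  intro k
  induction k using Nat.twoStepInduction with
  | zero => simp [d, S]
  | one => simp [d, S]
  | more n ih1 ih2 =>
    have hrec : d (n+2) = 14 * d (n+1) - d n + 8 := rfl
    have hs := S_rec n
    have hinv := S_inv n
    rw [hrec, ih1, ih2]
    nlinarith [hs, hinv]

lemma S_real : ∀ k, (S k : ℝ) =
    ((2 + Real.sqrt 3)^k - (2 - Real.sqrt 3)^k) / (2 * Real.sqrt 3) := by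
  have h3 : Real.sqrt 3 ^ 2 = 3 := Real.sq_sqrt (by norm_num)
  have hpos : (0:ℝ) < Real.sqrt 3 := Real.sqrt_pos.mpr (by norm_num)
  have hne : (2 * Real.sqrt 3 : ℝ) ≠ 0 := by positivity
  intro k
  induction k using Nat.twoStepInduction with
  | zero => simp [S]
  | one => simp [S]; field_simp; ring
  | more n ih1 ih2 =>
    have hs := S_rec n
    have : ((S (n+2) : ℤ) : ℝ) = 4 * (S (n+1) : ℝ) - (S n : ℝ) := by
      rw [hs]; push_cast; ring
    push_cast at this
    rw [this, ih1, ih2]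
    field_simp
    ring_nf
    rw [h3]; ring

theorem stmt_3 : ∀ k : ℕ, ∃ s : ℕ,
    ((s : ℝ) = ((2 + Real.sqrt 3)^k - (2 - Real.sqrt 3)^k) / (2 * Real.sqrt 3)) ∧
    d k + 1 = -2 * (s : ℤ)^2 := by
  intro k
  exact ⟨S k, S_real k, by rw [d_eq k]; ring⟩
end

section
/- For every integer k ≥ 0, 3d_k + 1 = -2t_k^2 where t_k = ((2+√3)^k + (2-√3)^k)/2; that is, there exists a positive integer t with 3d_k + 1 = -2t^2. -/
def T : ℕ → ℤ
  | 0 => 1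
  | 1 => 2
  | (l+2) => 4 * T (l+1) - T l

lemma T_pos_mono : ∀ k, 1 ≤ T k ∧ T k ≤ T (k+1) := by
  intro k
  induction k with
  | zero => exact ⟨le_refl 1, by norm_num [T]⟩
  | succ n ih =>
    obtain ⟨h1, h2⟩ := ih
    refine ⟨le_trans h1 h2, ?_⟩
    show T (n+1) ≤ 4 * T (n+1) - T n
    linarith

lemma T_inv : ∀ k, T (k+1)^2 - 4 * T (k+1) * T k + T k ^ 2 = -3 := by
  intro k
  induction k with
  | zero => norm_num [T]
  | succ n ih =>
    have : T (n+2) = 4 * T (n+1) - T n := rfl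
    rw [this] at *
    nlinarith [ih]

lemma key : ∀ k, 3 * d k + 1 = -2 * T k ^ 2 ∧ 3 * d (k+1) + 1 = -2 * T (k+1) ^ 2 := by
  intro k
  induction k with
  | zero => norm_num [d, T]
  | succ n ih =>
    obtain ⟨h1, h2⟩ := ih
    refine ⟨h2, ?_⟩
    have hd : d (n+2) = 14 * d (n+1) - d n + 8 := rfl
    have hT : T (n+2) = 4 * T (n+1) - T n := rfl
    have hinv := T_inv n
    rw [hd, hT]
    nlinarith [h1, h2, hinv]

lemma sqrt3_sq : Real.sqrt 3 ^ 2 = 3 := Real.sq_sqrt (by norm_num)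

lemma T_real : ∀ k, (T k : ℝ) = ((2 + Real.sqrt 3)^k + (2 - Real.sqrt 3)^k) / 2 := by
  have key2 : ∀ k, (T k : ℝ) = ((2 + Real.sqrt 3)^k + (2 - Real.sqrt 3)^k) / 2 ∧
      (T (k+1) : ℝ) = ((2 + Real.sqrt 3)^(k+1) + (2 - Real.sqrt 3)^(k+1)) / 2 := by
    intro k
    induction k with
    | zero =>
      constructor
      · norm_num [T]
      · show ((2:ℤ) : ℝ) = _
        have := sqrt3_sq
        push_cast
        ring_nf
    | succ n ih =>
      obtain ⟨h1, h2⟩ := ih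
      refine ⟨h2, ?_⟩
      have hT : T (n+2) = 4 * T (n+1) - T n := rfl
      rw [hT]
      push_cast
      have hx1 : ((2:ℝ) + Real.sqrt 3)^2 = 4*(2 + Real.sqrt 3) - 1 := by nlinarith [sqrt3_sq]
      have hx2 : ((2:ℝ) - Real.sqrt 3)^2 = 4*(2 - Real.sqrt 3) - 1 := by nlinarith [sqrt3_sq]
      have e1 : ((2:ℝ) + Real.sqrt 3)^(n+2) = 4*(2 + Real.sqrt 3)^(n+1) - (2 + Real.sqrt 3)^n := by
        rw [show ((2:ℝ) + Real.sqrt 3)^(n+2) = (2 + Real.sqrt 3)^n * (2 + Real.sqrt 3)^2 by ring, hx1]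
        ring
      have e2 : ((2:ℝ) - Real.sqrt 3)^(n+2) = 4*(2 - Real.sqrt 3)^(n+1) - (2 - Real.sqrt 3)^n := by
        rw [show ((2:ℝ) - Real.sqrt 3)^(n+2) = (2 - Real.sqrt 3)^n * (2 - Real.sqrt 3)^2 by ring, hx2]
        ring
      rw [h1, h2, e1, e2]
      ring
  exact fun k => (key2 k).1

theorem stmt_4 : ∀ k : ℕ, ∃ t : ℕ, 0 < t ∧
    ((t : ℝ) = ((2 + Real.sqrt 3)^k + (2 - Real.sqrt 3)^k) / 2) ∧
    3 * d k + 1 = -2 * (t : ℤ)^2 := by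
  intro k
  have hpos : 1 ≤ T k := (T_pos_mono k).1
  refine ⟨(T k).toNat, ?_, ?_, ?_⟩
  · omega
  · have : ((T k).toNat : ℤ) = T k := Int.toNat_of_nonneg (by omega)
    have : ((T k).toNat : ℝ) = (T k : ℝ) := by exact_mod_cast congrArg (Int.cast : ℤ → ℝ) this
    rw [this, T_real]
  · have h : ((T k).toNat : ℤ) = T k := Int.toNat_of_nonneg (by omega)
    rw [h]
    exact (key k).1
end

section
/- Let D be a positive odd integer. Suppose sequences (ν_m) and (ω_n) of integers satisfy ν_{m+2} = (4D - 2)ν_{m+1} - ν_m and ω_{n+2} = (12D - 2)ω_{n+1} - ω_n with initial values ν_0 = z_0, ν_1 = (2D-1)z_0 + 4sDx_0 and ω_0 = z_1, ω_1 = (6D-1)z_1 + 4tDy_1 for integers z_0, z_1, x_0, y_1, s, t. Then for all m, n ≥ 0: ν_{2m} ≡ z_0 (mod 2D), ν_{2m+1} ≡ -z_0 (mod 2D), ω_{2n} ≡ z_1 (mod 2D), and ω_{2n+1} ≡ -z_1 (mod 2D). -/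
lemma aux_rec (N c x0 : ℤ) (f : ℕ → ℤ)
    (h0 : f 0 ≡ x0 [ZMOD N]) (h1 : f 1 ≡ -x0 [ZMOD N])
    (hc : c ≡ -2 [ZMOD N])
    (hrec : ∀ k : ℕ, f (k + 2) = c * f (k + 1) - f k) :
    ∀ k : ℕ, f k ≡ (-1) ^ k * x0 [ZMOD N] := by
  have key : ∀ k : ℕ, f k ≡ (-1) ^ k * x0 [ZMOD N] ∧
      f (k + 1) ≡ (-1) ^ (k + 1) * x0 [ZMOD N] := by
    intro k
    induction k with
    | zero => simpa using ⟨h0, h1⟩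
    | succ n ih =>
      refine ⟨ih.2, ?_⟩
      rw [hrec n]
      have := (hc.mul ih.2).sub ih.1
      calc c * f (n + 1) - f n ≡ -2 * ((-1) ^ (n + 1) * x0) - (-1) ^ n * x0 [ZMOD N] := this
        _ = (-1) ^ (n + 1 + 1) * x0 := by ring
  exact fun k => (key k).1

theorem stmt_10 (D : ℤ) (hD : 0 < D) (hodd : Odd D)
    (z₀ z₁ x₀ y₁ s t : ℤ) (ν ω : ℕ → ℤ)
    (hν0 : ν 0 = z₀) (hν1 : ν 1 = (2 * D - 1) * z₀ + 4 * s * D * x₀)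
    (hνrec : ∀ m : ℕ, ν (m + 2) = (4 * D - 2) * ν (m + 1) - ν m)
    (hω0 : ω 0 = z₁) (hω1 : ω 1 = (6 * D - 1) * z₁ + 4 * t * D * y₁)
    (hωrec : ∀ n : ℕ, ω (n + 2) = (12 * D - 2) * ω (n + 1) - ω n) :
    ∀ m n : ℕ,
      ν (2 * m) ≡ z₀ [ZMOD 2 * D] ∧ ν (2 * m + 1) ≡ -z₀ [ZMOD 2 * D] ∧
      ω (2 * n) ≡ z₁ [ZMOD 2 * D] ∧ ω (2 * n + 1) ≡ -z₁ [ZMOD 2 * D] := by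
  have hν1' : ν 1 ≡ -z₀ [ZMOD 2 * D] := by
    rw [hν1]
    have : (2 * D - 1) * z₀ + 4 * s * D * x₀ - (-z₀) = (2 * D) * (z₀ + 2 * s * x₀) := by ring
    exact Int.ModEq.symm (Int.modEq_iff_dvd.mpr ⟨z₀ + 2 * s * x₀, by linarith [this]⟩)
  have hω1' : ω 1 ≡ -z₁ [ZMOD 2 * D] := by
    rw [hω1]
    have : (6 * D - 1) * z₁ + 4 * t * D * y₁ - (-z₁) = (2 * D) * (3 * z₁ + 2 * t * y₁) := by ring
    exact Int.ModEq.symm (Int.modEq_iff_dvd.mpr ⟨3 * z₁ + 2 * t * y₁, by linarith [this]⟩)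
  have hcν : (4 * D - 2 : ℤ) ≡ -2 [ZMOD 2 * D] := by
    exact Int.ModEq.symm (Int.modEq_iff_dvd.mpr ⟨2, by ring⟩)
  have hcω : (12 * D - 2 : ℤ) ≡ -2 [ZMOD 2 * D] := by
    exact Int.ModEq.symm (Int.modEq_iff_dvd.mpr ⟨6, by ring⟩)
  have Hν := aux_rec (2 * D) (4 * D - 2) z₀ ν (by rw [hν0]) hν1' hcν hνrec
  have Hω := aux_rec (2 * D) (12 * D - 2) z₁ ω (by rw [hω0]) hω1' hcω hωrec
  intro m n
  have e1 := Hν (2 * m); have e2 := Hν (2 * m + 1)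
  have f1 := Hω (2 * n); have f2 := Hω (2 * n + 1)
  rw [pow_mul] at e1 f1
  rw [pow_succ, pow_mul] at e2 f2
  norm_num at e1 e2 f1 f2
  exact ⟨e1, e2, f1, f2⟩
end

section
/- Let D be a positive integer and let (ν_m) satisfy ν_0 = z_0, ν_1 = (2D-1)z_0 + 4sDx_0, ν_{m+2} = (4D-2)ν_{m+1} - ν_m for integers z_0, x_0, s. Then for all m ≥ 0, ν_m ≡ (-1)^m (z_0 - 2Dm^2 z_0 - 4Dsm x_0) (mod 8D^2). -/
theorem stmt_11 (D : ℤ) (hD : 0 < D) (z₀ x₀ s : ℤ) (ν : ℕ → ℤ)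
    (hν0 : ν 0 = z₀) (hν1 : ν 1 = (2 * D - 1) * z₀ + 4 * s * D * x₀)
    (hνrec : ∀ m : ℕ, ν (m + 2) = (4 * D - 2) * ν (m + 1) - ν m) :
    ∀ m : ℕ,
      ν m ≡ (-1)^m * (z₀ - 2 * D * (m : ℤ)^2 * z₀ - 4 * D * s * (m : ℤ) * x₀)
        [ZMOD 8 * D^2] := by
  set f : ℕ → ℤ := fun m =>
    (-1)^m * (z₀ - 2 * D * (m : ℤ)^2 * z₀ - 4 * D * s * (m : ℤ) * x₀) with hf
  have key : ∀ m : ℕ, ν m ≡ f m [ZMOD 8 * D^2] ∧ ν (m+1) ≡ f (m+1) [ZMOD 8 * D^2] := by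
    intro m
    induction m with
    | zero =>
      constructor
      · simp [hf, hν0]
      · have : f 1 = (2 * D - 1) * z₀ + 4 * s * D * x₀ := by
          simp [hf]; ring
        rw [hν1, this]
    | succ n ih =>
      refine ⟨ih.2, ?_⟩
      have h1 : ν (n + 2) ≡ (4 * D - 2) * f (n+1) - f n [ZMOD 8 * D^2] := by
        rw [hνrec n]
        exact Int.ModEq.sub (ih.2.mul_left _) ih.1
      have h2 : (4 * D - 2) * f (n+1) - f n ≡ f (n+2) [ZMOD 8 * D^2] := by
        rw [Int.modEq_iff_dvd]
        refine ⟨-(-1)^n * (((n:ℤ)+1)^2 * z₀ + 2 * s * ((n:ℤ)+1) * x₀), ?_⟩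
        simp only [hf]
        push_cast
        ring
      exact h1.trans h2
  exact fun m => (key m).1
end

section
/- The only solutions in nonnegative integers of the simultaneous equations y^2 - 3x^2 = 1 and z^2 - 2x^2 = 2 have x = 1 (i.e., (x, y, z) = (1, 2, 2)). -/
/-!
Writing `z = 2w`, the second equation says `x² - 2w² = -1`, so `x + w√2 = (1 + √2)^j` with `j`
odd. Put `N_k = Re (1 + √2)^(2k)`. Since `(1 + √2)^(4k) ≡ -1 (mod N_k)`, the class of `x²` modulo
`N_k` only depends on `j` modulo `4k`, and for `j ≡ 2k ± 1 (mod 4k)` it is `-2`, so that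
`y² = 3x² + 1 ≡ -5 (mod N_k)`. For `k = 2^c` with `c ≥ 1` we have `N_k ≡ 17 (mod 20)`, hence
`(-5 / N_k) = -1`, which rules this out. By induction on `c`, `j ≡ ±1` modulo every power of `2`,
so `j = 1` and `x = 1`.
-/

open Zsqrtd

namespace Zsqrtd

theorem sq_add_one_of_norm_eq_one {d : ℤ} {a : ℤ√d} (h : a.norm = 1) :
    a ^ 2 + 1 = (2 * a.re : ℤ) * a := by
  rw [norm_def] at h
  ext
  · simp only [sq, re_add, re_mul, re_one, re_intCast, im_intCast]
    linear_combination -h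
  · simp only [sq, im_add, im_mul, im_one, re_intCast, im_intCast]
    ring

end Zsqrtd

def silverUnit : ℤ√2 := ⟨1, 1⟩

theorem norm_silverUnit_pow (n : ℕ) : (silverUnit ^ n).norm = (-1) ^ n := by
  induction n with
  | zero => simp
  | succ n ih => rw [pow_succ, norm_mul, ih, pow_succ]; rfl

theorem norm_silverUnit_pow_two_mul (k : ℕ) : (silverUnit ^ (2 * k)).norm = 1 := by
  rw [norm_silverUnit_pow, pow_mul]; norm_num

theorem silverUnit_pow_four_mul_add_one (k : ℕ) :
    silverUnit ^ (4 * k) + 1 = (2 * (silverUnit ^ (2 * k)).re : ℤ) * silverUnit ^ (2 * k) := by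
  rw [← sq_add_one_of_norm_eq_one (norm_silverUnit_pow_two_mul k), ← pow_mul]
  ring_nf

theorem re_silverUnit_pow_four_mul (k : ℕ) :
    (silverUnit ^ (4 * k)).re = 2 * (silverUnit ^ (2 * k)).re ^ 2 - 1 := by
  have h := congrArg re (silverUnit_pow_four_mul_add_one k)
  rw [re_add, re_one, re_smul] at h
  linear_combination h

theorem re_silverUnit_pow_add_four_mul_modEq (k i q : ℕ) :
    (silverUnit ^ (i + 4 * k * q)).re ≡ (-1) ^ q * (silverUnit ^ i).re
      [ZMOD (silverUnit ^ (2 * k)).re] := by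
  have h1 : ((silverUnit ^ (2 * k)).re : ℤ√2) ∣ silverUnit ^ (4 * k) - (-1) := by
    rw [sub_neg_eq_add, silverUnit_pow_four_mul_add_one, Int.cast_mul]
    exact (dvd_mul_left _ _).mul_right _
  have h2 := (h1.trans (sub_dvd_pow_sub_pow _ _ q)).mul_right (silverUnit ^ i)
  rw [sub_mul, ← pow_mul, ← pow_add, add_comm,
    show ((-1) ^ q : ℤ√2) = (((-1) ^ q : ℤ) : ℤ√2) by push_cast; rfl] at h2
  refine (Int.modEq_iff_dvd.2 ?_).symm
  simpa only [re_sub, re_smul] using ((intCast_dvd _ _).1 h2).1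

theorem sq_re_silverUnit_pow_add_four_mul_modEq (k i q : ℕ) :
    (silverUnit ^ (i + 4 * k * q)).re ^ 2 ≡ (silverUnit ^ i).re ^ 2
      [ZMOD (silverUnit ^ (2 * k)).re] := by
  simpa [mul_pow, ← pow_mul] using (re_silverUnit_pow_add_four_mul_modEq k i q).pow 2

theorem sq_re_mul_silverUnit_modEq {a : ℤ√2} (h : a.norm = 1) :
    (a * silverUnit).re ^ 2 ≡ -2 [ZMOD a.re] := by
  rw [norm_def] at h
  refine Int.modEq_iff_dvd.2 ⟨-3 * a.re - 4 * a.im, ?_⟩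
  simp only [re_mul, silverUnit]
  linear_combination 2 * h

theorem sq_re_modEq_of_mul_silverUnit {b : ℤ√2} (h : (b * silverUnit).norm = 1) :
    b.re ^ 2 ≡ -2 [ZMOD (b * silverUnit).re] := by
  rw [norm_def] at h
  refine Int.modEq_iff_dvd.2 ⟨-3 * (b * silverUnit).re + 4 * (b * silverUnit).im, ?_⟩
  simp only [re_mul, im_mul, silverUnit] at h ⊢
  linear_combination 2 * h

theorem sq_re_silverUnit_pow_modEq_neg_two {k j : ℕ} (hk : 0 < k)
    (hj : j % (4 * k) = 2 * k + 1 ∨ j % (4 * k) = 2 * k - 1) :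
    (silverUnit ^ j).re ^ 2 ≡ -2 [ZMOD (silverUnit ^ (2 * k)).re] := by
  have hperiod := sq_re_silverUnit_pow_add_four_mul_modEq k (j % (4 * k)) (j / (4 * k))
  rw [Nat.mod_add_div] at hperiod
  refine hperiod.trans ?_
  rcases hj with h | h <;> rw [h]
  · rw [pow_succ silverUnit]
    exact sq_re_mul_silverUnit_modEq (norm_silverUnit_pow_two_mul k)
  · have hsplit : silverUnit ^ (2 * k) = silverUnit ^ (2 * k - 1) * silverUnit :=
      (pow_sub_one_mul (by omega) _).symm
    have hnorm := norm_silverUnit_pow_two_mul k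
    rw [hsplit] at hnorm ⊢
    exact sq_re_modEq_of_mul_silverUnit hnorm

theorem re_silverUnit_pow_two_pow_pos_and_modEq (c : ℕ) :
    0 < (silverUnit ^ 2 ^ (c + 2)).re ∧ (silverUnit ^ 2 ^ (c + 2)).re ≡ 17 [ZMOD 20] := by
  induction c with
  | zero => decide
  | succ c ih =>
    obtain ⟨hpos, hmod⟩ := ih
    have hdouble : 2 ^ (c + 1 + 2) = 4 * 2 ^ (c + 1) := by ring
    have hhalf : 2 * 2 ^ (c + 1) = 2 ^ (c + 2) := by ring
    rw [hdouble, re_silverUnit_pow_four_mul, hhalf]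
    have hsq : (silverUnit ^ 2 ^ (c + 2)).re ^ 2 ≡ 17 ^ 2 [ZMOD 20] := Int.ModEq.pow 2 hmod
    refine ⟨by nlinarith, ((hsq.mul_left 2).sub_right 1).trans (by decide)⟩

theorem not_sq_modEq_neg_five {N : ℤ} (hpos : 0 < N) (hmod : N ≡ 17 [ZMOD 20]) (y : ℤ) :
    ¬y ^ 2 ≡ -5 [ZMOD N] := by
  lift N to ℕ using hpos.le
  unfold Int.ModEq at hmod
  have hodd : Odd N := Nat.odd_iff.2 (by omega)
  have hJ : jacobiSym (-5) N = -1 := by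
    rw [jacobiSym.mod_right _ hodd, show N % (4 * (-5 : ℤ).natAbs) = 17 by norm_num; omega]
    norm_num
  intro h
  refine ZMod.nonsquare_of_jacobiSym_eq_neg_one hJ ⟨y, ?_⟩
  rw [← (ZMod.intCast_eq_intCast_iff _ _ _).2 h]
  push_cast
  ring

theorem isFundamental_three_add_two_sqrtTwo :
    Pell.IsFundamental (Pell.Solution₁.mk 3 2 (by norm_num) : Pell.Solution₁ 2) := by
  refine ⟨by simp, by simp, fun {b} hb => ?_⟩
  have hb2 := b.prop
  simp only [Pell.Solution₁.x_mk]
  by_contra hlt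
  have hx : b.x = 2 := by omega
  rw [hx] at hb2
  omega

theorem exists_eq_silverUnit_pow_odd {α : ℤ√2} (hre : 0 ≤ α.re) (him : 0 ≤ α.im)
    (hnorm : α.norm = -1) : ∃ m : ℕ, α = silverUnit ^ (2 * m + 1) := by
  -- `α (1 + √2)` solves the Pell equation, so it is a power of `3 + 2√2 = (1 + √2)²`.
  have hβ : (α * silverUnit).norm = 1 := by rw [norm_mul, hnorm]; rfl
  have hα : α ≠ 0 := by rintro rfl; simp at hnorm
  have hβx : 0 < α.re + 2 * α.im := by
    by_contra hle
    exact hα (Zsqrtd.ext (by rw [re_zero]; omega) (by rw [im_zero]; omega))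
  obtain ⟨n, hn⟩ := isFundamental_three_add_two_sqrtTwo.eq_pow_of_nonneg
    (a := ⟨α * silverUnit, norm_eq_one_iff_mem_unitary.1 hβ⟩)
    (by simpa [Pell.Solution₁.x, re_mul, silverUnit] using hβx)
    (by simp only [Pell.Solution₁.y, silverUnit, im_mul, mul_one]; omega)
  have hpow : α * silverUnit = silverUnit ^ (2 * n) := by
    rw [pow_mul]
    exact (congrArg Subtype.val hn).trans (SubmonoidClass.coe_pow (S := unitary (ℤ√2)) _ n)
  cases n with
  | zero =>
    have hre := congrArg re hpow
    have him := congrArg im hpow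
    simp only [silverUnit, re_mul, mul_one, mul_zero, pow_zero, re_one, im_mul, im_one] at hre him
    omega
  | succ m =>
    have hinv : silverUnit * ⟨-1, 1⟩ = 1 := by decide
    refine ⟨m, ?_⟩
    calc α = α * silverUnit * ⟨-1, 1⟩ := by rw [mul_assoc, hinv, mul_one]
      _ = silverUnit ^ (2 * m + 1) := by
        rw [hpow, show 2 * (m + 1) = 2 * m + 1 + 1 by ring, pow_succ, mul_assoc, hinv, mul_one]

theorem mod_two_pow_eq_one_or_pred_of_sq_eq {j : ℕ} {y : ℤ} (hj : Odd j)
    (hy : y ^ 2 = 3 * (silverUnit ^ j).re ^ 2 + 1) (c : ℕ) :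
    j % 2 ^ (c + 2) = 1 ∨ j % 2 ^ (c + 2) = 2 ^ (c + 2) - 1 := by
  induction c with
  | zero => have := Nat.odd_iff.1 hj; omega
  | succ c ih =>
    set k := 2 ^ (c + 1) with hk
    have hk0 : 0 < k := by positivity
    have hhalf : 2 ^ (c + 2) = 2 * k := by rw [hk]; ring
    have hfull : 2 ^ (c + 1 + 2) = 4 * k := by rw [hk]; ring
    have hsplit : j % (4 * k) = j % (2 * k) ∨ j % (4 * k) = j % (2 * k) + 2 * k := by
      rw [show 4 * k = 2 * k * 2 by ring, Nat.mod_mul]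
      rcases Nat.mod_two_eq_zero_or_one (j / (2 * k)) with h | h <;> simp [h]
    rw [hhalf] at ih
    rw [hfull]
    by_contra hne
    -- otherwise `j ≡ 2k ± 1 (mod 4k)`, and `y² ≡ -5` modulo `N_k ≡ 17 (mod 20)`
    have hmid : j % (4 * k) = 2 * k + 1 ∨ j % (4 * k) = 2 * k - 1 := by omega
    obtain ⟨hpos, hmod⟩ := re_silverUnit_pow_two_pow_pos_and_modEq c
    rw [hhalf] at hpos hmod
    have hx := sq_re_silverUnit_pow_modEq_neg_two hk0 hmid
    refine not_sq_modEq_neg_five hpos hmod y ?_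
    rw [hy]
    exact (hx.mul_left 3).add_right 1

theorem eq_one_of_forall_mod_two_pow {j : ℕ}
    (h : ∀ c, j % 2 ^ (c + 2) = 1 ∨ j % 2 ^ (c + 2) = 2 ^ (c + 2) - 1) : j = 1 := by
  have hlt : j + 2 < 2 ^ (j + 2) := Nat.lt_two_pow_self
  have := h j
  rw [Nat.mod_eq_of_lt (by omega)] at this
  omega

theorem stmt_16 : ∀ x y z : ℤ, 0 ≤ x → 0 ≤ y → 0 ≤ z →
    y^2 - 3 * x^2 = 1 → z^2 - 2 * x^2 = 2 → x = 1 := by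
  intro x y z hx _ hz hxy hxz
  obtain ⟨w, rfl⟩ : Even z := ((Int.even_pow (n := 2)).1 ⟨x ^ 2 + 1, by linarith⟩).1
  obtain ⟨m, hm⟩ := exists_eq_silverUnit_pow_odd (α := ⟨x, w⟩) hx (show 0 ≤ w by omega)
    (by simp only [norm_def]; linarith)
  have hxm : x = (silverUnit ^ (2 * m + 1)).re := congrArg re hm
  have hy : y ^ 2 = 3 * (silverUnit ^ (2 * m + 1)).re ^ 2 + 1 := by rw [← hxm]; linarith
  have hm0 : 2 * m + 1 = 1 :=
    eq_one_of_forall_mod_two_pow (mod_two_pow_eq_one_or_pred_of_sq_eq (odd_two_mul_add_one m) hy)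
  rw [hxm, hm0]
  rfl
end

section
/- Let d < 0 be an integer with d ≡ 1 (mod 4) and suppose d + 1 = -2s^2 for a positive integer s. Then (-2d - 1, 2s) is the fundamental solution of the Pell equation z^2 + 2d·x^2 = 1 (equivalently z^2 - 2|d|x^2 = 1): i.e., (-2d-1)^2 + 2d(2s)^2 = 1, and -2d - 1 + 2s√(-2d) is the smallest solution greater than 1. -/
theorem stmt_18 (d s : ℤ) (hd : d < 0) (hd4 : d ≡ 1 [ZMOD 4])
    (hs : 0 < s) (hds : d + 1 = -2 * s^2) :
    (-2 * d - 1)^2 + 2 * d * (2 * s)^2 = 1 ∧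
    ∀ z x : ℤ, 0 < z → 0 < x → z^2 + 2 * d * x^2 = 1 → -2 * d - 1 ≤ z := by
  have hd' : d = -2 * s^2 - 1 := by linarith
  refine ⟨by linear_combination 4 * d * hds, ?_⟩
  intro z x hz hx heq
  subst hd'
  have hz2 : z^2 = (4*s^2+2)*x^2 + 1 := by linarith [heq]
  have hsx : 0 < 2*s*x := by positivity
  have hr : 2*s*x + 1 ≤ z := by nlinarith [sq_nonneg (z + 2*s*x)]
  have hx2 : 2*s ≤ x := by nlinarith
  nlinarith [sq_nonneg (z + 4*s^2 + 1), sq_nonneg s, mul_le_mul hx2 hx2 (by linarith) (by linarith : (0:ℤ) ≤ x)]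
end
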